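/- Let L be a complete modular lattice and 𝔪 a submonoid with zero of End_lin(L) that is closed under complements. If L is 𝔪-T-lifting and satisfies the 𝔪-D2 condition, then the quotient monoid 𝔪/≡^∇ is regular; concretely, for every φ ∈ 𝔪 there exist ψ ∈ 𝔪 and a superfluous element x ∈ L such that (φ ∘ ψ ∘ φ)(a) ⊔ x = φ(a) ⊔ x for all a ∈ L. -/

import Mathlib

section Preamble

variable {α β : Type*}

/-- A linear morphism between complete lattices: there is a kernel element `k` such that
`φ x = φ (x ⊔ k)` for all `x`, and `φ` restricts to an isomorphism of (complete) lattices
from the interval `[k, ⊤]` onto `[⊥, φ ⊤]`. -/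
def IsLinMor [CompleteLattice α] [CompleteLattice β] (φ : α → β) : Prop :=
  ∃ k : α, (∀ x, φ x = φ (x ⊔ k)) ∧
    ∃ e : Set.Icc k (⊤ : α) ≃o Set.Icc (⊥ : β) (φ ⊤),
      ∀ x : Set.Icc k (⊤ : α), (e x : β) = φ (x : α)

/-- The kernel of a linear morphism: the largest element sent to `⊥`. -/
noncomputable def linKer [CompleteLattice α] [CompleteLattice β] (φ : α → β) : α :=
  sSup {a | φ a = ⊥}

/-- A submonoid with zero of the monoid of linear endomorphisms of `α`. -/
structure IsLinSubmonoid [CompleteLattice α] (M : Set (α → α)) : Prop where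
  lin_mem : ∀ φ ∈ M, IsLinMor φ
  id_mem : (id : α → α) ∈ M
  zero_mem : (fun _ : α => (⊥ : α)) ∈ M
  comp_mem : ∀ φ ∈ M, ∀ ψ ∈ M, φ ∘ ψ ∈ M

/-- The projection onto `x` along a complement `x'`. -/
def proj [CompleteLattice α] (x x' : α) : α → α := fun a => (a ⊔ x') ⊓ x

/-- `M` is closed under complements: whenever `φ ∈ M` restricts to a linear isomorphism
`[⊥, x] → [⊥, y]` with `x, y` complemented, the composite `ι_x ∘ (φ|_x)⁻¹ ∘ π_y` is in `M`. -/
def ClosedUnderComplements [CompleteLattice α] (M : Set (α → α)) : Prop :=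
  ∀ φ ∈ M, ∀ x x' y y' : α, IsCompl x x' → IsCompl y y' →
    ∀ e : Set.Icc (⊥ : α) x ≃o Set.Icc (⊥ : α) y,
      (∀ a : Set.Icc (⊥ : α) x, ((e a : Set.Icc (⊥ : α) y) : α) = φ (a : α)) →
      (fun a : α =>
        ((e.symm ⟨(a ⊔ y') ⊓ y, bot_le, inf_le_right⟩ : Set.Icc (⊥ : α) x) : α)) ∈ M

/-- `L` is `M`-endoregular: `M` is a regular monoid. -/
def MEndoregular [CompleteLattice α] (M : Set (α → α)) : Prop :=
  ∀ φ ∈ M, ∃ ψ ∈ M, φ ∘ ψ ∘ φ = φ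

/-- `L` is `M`-Rickart: kernels of members of `M` have complements. -/
def MRickart [CompleteLattice α] (M : Set (α → α)) : Prop :=
  ∀ φ ∈ M, ∃ y, IsCompl (linKer φ) y

/-- `L` is dual-`M`-Rickart: images of members of `M` have complements. -/
def MDualRickart [CompleteLattice α] (M : Set (α → α)) : Prop :=
  ∀ φ ∈ M, ∃ y, IsCompl (φ ⊤) y

/-- The `M`-C2 condition. -/
def MC2 [CompleteLattice α] (M : Set (α → α)) : Prop :=
  ∀ a x x' : α, IsCompl x x' →
    ∀ e : Set.Icc (⊥ : α) x ≃o Set.Icc (⊥ : α) a,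
      ((fun b : α =>
          ((e ⟨(b ⊔ x') ⊓ x, bot_le, inf_le_right⟩ : Set.Icc (⊥ : α) a) : α)) ∈ M) →
      ∃ a', IsCompl a a'

/-- The `M`-D2 condition. -/
def MD2 [CompleteLattice α] (M : Set (α → α)) : Prop :=
  ∀ a x : α, (∃ x', IsCompl x x') →
    ∀ e : Set.Icc a (⊤ : α) ≃o Set.Icc (⊥ : α) x,
      ((fun b : α => ((e ⟨a ⊔ b, le_sup_left, le_top⟩ : Set.Icc (⊥ : α) x) : α)) ∈ M) →
      ∃ a', IsCompl a a'

/-- `L` is `M`-abelian: every idempotent of `M` is central in `M`. -/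
def MAbelian [CompleteLattice α] (M : Set (α → α)) : Prop :=
  ∀ ε ∈ M, ε ∘ ε = ε → ∀ φ ∈ M, ε ∘ φ = φ ∘ ε

/-- `a` is `M`-`L`-generated: it is a join of images of linear morphisms `L → [⊥, a]`
whose composites with the inclusion `ι_a` lie in `M`. -/
def MGenerated [CompleteLattice α] (M : Set (α → α)) (a : α) : Prop :=
  ∃ S : Set (α → α), S ⊆ M ∧ (∀ f ∈ S, ∀ x, f x ≤ a) ∧ (⨆ f ∈ S, f ⊤) = a

/-- A complete lattice is compact if every join representation of `⊤` has a finite subjoin. -/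
def CompactLat (α : Type*) [CompleteLattice α] : Prop :=
  ∀ s : Set α, sSup s = ⊤ → ∃ t : Finset α, ↑t ⊆ s ∧ sSup (↑t : Set α) = ⊤

/-- An element `c` is compact if the interval `[⊥, c]` is a compact lattice. -/
def CompactElt [CompleteLattice α] (c : α) : Prop :=
  ∀ s : Set α, (∀ a ∈ s, a ≤ c) → sSup s = c →
    ∃ t : Finset α, ↑t ⊆ s ∧ sSup (↑t : Set α) = c

/-- `x` is essential in `L`. -/
def Essential [CompleteLattice α] (x : α) : Prop := ∀ y, x ⊓ y = ⊥ → y = ⊥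

/-- `x` is essential in the interval `[⊥, c]`. -/
def EssentialIn [CompleteLattice α] (x c : α) : Prop :=
  x ≤ c ∧ ∀ y ≤ c, x ⊓ y = ⊥ → y = ⊥

/-- `x` is superfluous in `L`. -/
def Superfluous [CompleteLattice α] (x : α) : Prop := ∀ y, x ⊔ y = ⊤ → y = ⊤

/-- `x` is superfluous in the interval `[⊥, c]`. -/
def SuperfluousIn [CompleteLattice α] (x c : α) : Prop :=
  x ≤ c ∧ ∀ y ≤ c, x ⊔ y = c → y = c

/-- `M` contains all the projections. -/
def ContainsProjections [CompleteLattice α] (M : Set (α → α)) : Prop :=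
  ∀ x x' : α, IsCompl x x' → proj x x' ∈ M

/-- `L` is `M`-K-extending. -/
def MKExtending [CompleteLattice α] (M : Set (α → α)) : Prop :=
  ∀ φ ∈ M, ∃ c : α, (∃ c', IsCompl c c') ∧ EssentialIn (linKer φ) c

/-- `L` is `M`-K-nonsingular. -/
def MKNonsingular [CompleteLattice α] (M : Set (α → α)) : Prop :=
  ∀ φ ∈ M, Essential (linKer φ) → φ = fun _ => (⊥ : α)

/-- `L` is `M`-T-lifting. -/
def MTLifting [CompleteLattice α] (M : Set (α → α)) : Prop :=
  ∀ φ ∈ M, ∃ c c' : α, IsCompl c c' ∧ c ≤ φ ⊤ ∧ SuperfluousIn (φ ⊤ ⊓ c') c'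

end Preamble

/-!
T-lifting gives a complemented `c ≤ φ ⊤` with complement `c'` such that `x := φ ⊤ ⊓ c'` is
superfluous in `[⊥, c']`, hence in `L` by modularity. The composite `χ = π_c ∘ φ ∈ 𝔪` has image
`c`, so D2 applied to `ι_c ∘ (χ restricted to [ker χ, ⊤]) ∘ ρ_ker = χ` makes its kernel
complemented, say by `a'`. Then `χ` maps `[⊥, a']` isomorphically onto `[⊥, c]`, and closure under
complements turns the inverse into `ψ ∈ 𝔪` with `χ ∘ ψ = π_c`. Modulo `x`, every `u ≤ φ ⊤` agrees
with `π_c u`, so `φ ψ φ ≡ π_c φ ψ φ = π_c φ ≡ φ`.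
-/

section

variable {α β : Type*} [CompleteLattice α]

theorem IsLinMor.apply_le_apply_top [CompleteLattice β] {φ : α → β}
    (hφ : IsLinMor φ) (t : α) : φ t ≤ φ ⊤ := by
  obtain ⟨k, hk, e, he⟩ := hφ
  rw [hk t, ← he ⟨t ⊔ k, le_sup_right, le_top⟩]
  exact (e _).2.2

theorem proj_eq_of_le {c c' t : α} (h : IsCompl c c') (hct : c ≤ t) :
    proj c c' t = c := by
  rw [proj, top_unique (h.sup_eq_top ▸ sup_le_sup_right hct c' : ⊤ ≤ t ⊔ c'), top_inf_eq]

theorem proj_mem {M : Set (α → α)} (hid : id ∈ M)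
    (hcc : ClosedUnderComplements M) {c c' : α} (h : IsCompl c c') : proj c c' ∈ M :=
  hcc id hid c c' c c' h h (OrderIso.refl _) fun _ => rfl

theorem MD2.exists_isCompl_kernel {M : Set (α → α)} (hd2 : MD2 M) {φ : α → α} (hφ : φ ∈ M)
    {k : α} (hk : ∀ x, φ x = φ (x ⊔ k)) (e : Set.Icc k (⊤ : α) ≃o Set.Icc (⊥ : α) (φ ⊤))
    (he : ∀ x : Set.Icc k (⊤ : α), (e x : α) = φ x) (htop : ∃ y, IsCompl (φ ⊤) y) :
    ∃ k', IsCompl k k' := by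
  refine hd2 k (φ ⊤) htop e ?_
  convert hφ using 1
  funext b
  rw [he]
  exact (congrArg φ (sup_comm k b)).trans (hk b).symm

section Modular

variable [IsModularLattice α]

theorem SuperfluousIn.superfluous {x c : α} (hx : SuperfluousIn x c) : Superfluous x := by
  intro y hy
  have hyc : y ⊓ c = c :=
    hx.2 _ inf_le_right (by rw [← sup_inf_assoc_of_le _ hx.1, hy, top_inf_eq])
  exact top_le_iff.mp (hy ▸ sup_le (hx.1.trans (hyc ▸ inf_le_left)) le_rfl)

theorem proj_sup_inf_eq {c c' t u : α} (h : IsCompl c c') (hct : c ≤ t) (hut : u ≤ t) :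
    proj c c' u ⊔ t ⊓ c' = u ⊔ t ⊓ c' := by
  have ht : c ⊔ t ⊓ c' = t := by
    rw [inf_comm, ← sup_inf_assoc_of_le _ hct, h.sup_eq_top, top_inf_eq]
  calc proj c c' u ⊔ t ⊓ c' = (u ⊔ c') ⊓ (c ⊔ t ⊓ c') :=
        inf_sup_assoc_of_le c (inf_le_right.trans le_sup_right)
    _ = u ⊔ t ⊓ c' := by rw [ht, sup_inf_assoc_of_le _ hut, inf_comm]

theorem exists_orderIso_of_isCompl_kernel [CompleteLattice β] {φ : α → β} {k a' : α}
    (hk : ∀ x, φ x = φ (x ⊔ k)) (e : Set.Icc k (⊤ : α) ≃o Set.Icc (⊥ : β) (φ ⊤))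
    (he : ∀ x : Set.Icc k (⊤ : α), (e x : β) = φ x) (h : IsCompl a' k) :
    ∃ E : Set.Icc (⊥ : α) a' ≃o Set.Icc (⊥ : β) (φ ⊤), ∀ v, (E v : β) = φ v := by
  refine ⟨((OrderIso.setCongr _ (Set.Icc (a' ⊓ k) a') (by rw [h.inf_eq_bot])).trans
    ((infIccOrderIsoIccSup a' k).trans
      (OrderIso.setCongr _ (Set.Icc k ⊤) (by rw [h.sup_eq_top])))).trans e,
    fun v => (he ⟨(v : α) ⊔ k, le_sup_right, le_top⟩).trans (hk v).symm⟩

theorem exists_comp_eq_proj {M : Set (α → α)} (hM : IsLinSubmonoid M)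
    (hcc : ClosedUnderComplements M) (hd2 : MD2 M) {χ : α → α} (hχ : χ ∈ M) {c c' : α}
    (hc : IsCompl c c') (hχc : χ ⊤ = c) : ∃ ψ ∈ M, ∀ b, χ (ψ b) = proj c c' b := by
  subst hχc
  obtain ⟨k, hk, e, he⟩ := hM.lin_mem χ hχ
  obtain ⟨a', ha'⟩ := hd2.exists_isCompl_kernel hχ hk e he ⟨c', hc⟩
  obtain ⟨E, hE⟩ := exists_orderIso_of_isCompl_kernel hk e he ha'.symm
  refine ⟨_, hcc χ hχ a' k _ c' ha'.symm hc E hE, fun b => ?_⟩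
  rw [← hE, E.apply_symm_apply]
  rfl

end Modular

end

/-- If `L` is `M`-T-lifting and satisfies `M`-D2, then `M/≡^∇` is a regular
monoid: for every `φ ∈ M` there exist `ψ ∈ M` and a superfluous `x` with
`(φ ∘ ψ ∘ φ) a ⊔ x = φ a ⊔ x` for all `a`. -/
theorem stmt_19 {α : Type*} [CompleteLattice α] [IsModularLattice α]
    (M : Set (α → α)) (hM : IsLinSubmonoid M) (hcc : ClosedUnderComplements M)
    (htl : MTLifting M) (hd2 : MD2 M) :
    ∀ φ ∈ M, ∃ ψ ∈ M, ∃ x : α, Superfluous x ∧ ∀ a : α, φ (ψ (φ a)) ⊔ x = φ a ⊔ x := by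
  intro φ hφ
  obtain ⟨c, c', hc, hcφ, hsup⟩ := htl φ hφ
  obtain ⟨ψ, hψ, hψχ⟩ := exists_comp_eq_proj hM hcc hd2
    (hM.comp_mem _ (proj_mem hM.id_mem hcc hc) φ hφ) hc (proj_eq_of_le hc hcφ)
  have hφtop := (hM.lin_mem φ hφ).apply_le_apply_top
  refine ⟨ψ, hψ, φ ⊤ ⊓ c', hsup.superfluous, fun a => ?_⟩
  calc φ (ψ (φ a)) ⊔ φ ⊤ ⊓ c' = proj c c' (φ (ψ (φ a))) ⊔ φ ⊤ ⊓ c' :=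
        (proj_sup_inf_eq hc hcφ (hφtop _)).symm
    _ = proj c c' (φ a) ⊔ φ ⊤ ⊓ c' := congrArg (· ⊔ φ ⊤ ⊓ c') (hψχ (φ a))
    _ = φ a ⊔ φ ⊤ ⊓ c' := proj_sup_inf_eq hc hcφ (hφtop _)
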